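/- arXiv:2505.11947 — 2 statements merged into one kernel-verified Lean document; each statement's English description precedes it below -/
import Mathlib

section
/- The number of binary strings b_1 ... b_m (m ≥ 2) with b_1 = b_m = 1 that contain neither two consecutive zeros nor three consecutive ones equals the m-th Padovan number P_m, where P_1 = P_2 = P_3 = 1 and P_n = P_{n-2} + P_{n-3}. -/
/-!
A word of length at least four that starts and ends with `1` and contains neither `00` nor `111`
starts with `10` or `110` followed by a shorter word of the same kind: after `1`, `0` forces `1`,
and `11` forces `0` and then `1`. Stripping this prefix is a bijection onto the words that are two
or three letters shorter, which is the Padovan recurrence; the lengths one, two and three admit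
exactly one word each (`1`, `11`, `101`).
-/

/-- The Padovan sequence with `padovan 1 = padovan 2 = padovan 3 = 1` and
`padovan n = padovan (n-2) + padovan (n-3)`. -/
def padovan : ℕ → ℕ
  | 0 => 1
  | 1 => 1
  | 2 => 1
  | 3 => 1
  | n + 4 => padovan (n + 2) + padovan (n + 1)

def AvoidsPatterns {m : ℕ} (b : Fin m → Bool) : Prop :=
  (∀ i : ℕ, ∀ h : i + 1 < m, ¬(b ⟨i, Nat.lt_of_succ_lt h⟩ = false ∧ b ⟨i + 1, h⟩ = false)) ∧
  (∀ i : ℕ, ∀ h : i + 2 < m,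
    ¬(b ⟨i, Nat.lt_of_add_right_lt h⟩ = true ∧ b ⟨i + 1, Nat.lt_of_succ_lt h⟩ = true ∧
      b ⟨i + 2, h⟩ = true))

theorem avoidsPatterns_cons_false {n : ℕ} (c : Fin (n + 1) → Bool) :
    AvoidsPatterns (Fin.cons false c : Fin (n + 2) → Bool) ↔ c 0 = true ∧ AvoidsPatterns c := by
  constructor
  · rintro ⟨h00, h111⟩
    exact ⟨by simpa using h00 0 (by omega), fun i _ => h00 (i + 1) (by omega),
      fun i _ => h111 (i + 1) (by omega)⟩
  · rintro ⟨hc0, h00, h111⟩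
    refine ⟨fun i h => ?_, fun i h => ?_⟩
    · cases i with
      | zero => simpa using hc0
      | succ i => exact h00 i (by omega)
    · cases i with
      | zero => simp
      | succ i => exact h111 i (by omega)

theorem avoidsPatterns_cons_true {n : ℕ} (c : Fin (n + 2) → Bool) :
    AvoidsPatterns (Fin.cons true c : Fin (n + 3) → Bool) ↔
      ¬(c 0 = true ∧ c 1 = true) ∧ AvoidsPatterns c := by
  constructor
  · rintro ⟨h00, h111⟩
    exact ⟨fun hc => h111 0 (by omega) ⟨rfl, hc⟩, fun i _ => h00 (i + 1) (by omega),
      fun i _ => h111 (i + 1) (by omega)⟩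
  · rintro ⟨hc01, h00, h111⟩
    refine ⟨fun i h => ?_, fun i h => ?_⟩
    · cases i with
      | zero => simp
      | succ i => exact h00 i (by omega)
    · cases i with
      | zero => exact fun hc => hc01 hc.2
      | succ i => exact h111 i (by omega)

abbrev PadovanWord (n : ℕ) : Type :=
  {b : Fin (n + 1) → Bool // b 0 = true ∧ b (Fin.last n) = true ∧ AvoidsPatterns b}

namespace PadovanWord

def prepend {n : ℕ} : PadovanWord (n + 1) ⊕ PadovanWord n → PadovanWord (n + 3)
  | .inl c => ⟨Fin.cons true (Fin.cons false c.1), rfl, c.2.2.1,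
      (avoidsPatterns_cons_true _).2 ⟨by simp, (avoidsPatterns_cons_false _).2 ⟨c.2.1, c.2.2.2⟩⟩⟩
  | .inr c => ⟨Fin.cons true (Fin.cons true (Fin.cons false c.1)), rfl, c.2.2.1,
      (avoidsPatterns_cons_true _).2 ⟨by simp,
        (avoidsPatterns_cons_true _).2 ⟨by simp, (avoidsPatterns_cons_false _).2 ⟨c.2.1, c.2.2.2⟩⟩⟩⟩

theorem prepend_injective {n : ℕ} : Function.Injective (prepend (n := n)) := by
  rintro (c | c) (d | d) h <;> simp_all [prepend, Fin.cons_inj, Subtype.ext_iff]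

theorem prepend_surjective {n : ℕ} : Function.Surjective (prepend (n := n)) := by
  rintro ⟨b, hb0, hlast, hb⟩
  induction b using Fin.consCases with | cons x b => ?_
  induction b using Fin.consCases with | cons y b => ?_
  induction b using Fin.consCases with | cons z d => ?_
  obtain rfl : x = true := hb0
  obtain ⟨hyz, hb⟩ := (avoidsPatterns_cons_true _).1 hb
  cases y
  · obtain ⟨hz, hb⟩ := (avoidsPatterns_cons_false _).1 hb
    obtain rfl : z = true := hz
    exact ⟨.inl ⟨Fin.cons true d, rfl, hlast, hb⟩, rfl⟩
  · obtain rfl : z = false := by simpa using hyz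
    obtain ⟨-, hb⟩ := (avoidsPatterns_cons_true _).1 hb
    obtain ⟨hd0, hd⟩ := (avoidsPatterns_cons_false _).1 hb
    exact ⟨.inr ⟨d, hd0, hlast, hd⟩, rfl⟩

theorem card_add_three (n : ℕ) :
    Nat.card (PadovanWord (n + 3)) = Nat.card (PadovanWord (n + 1)) + Nat.card (PadovanWord n) :=
  (Nat.card_eq_of_bijective _ ⟨prepend_injective, prepend_surjective⟩).symm.trans Nat.card_sum

theorem card_zero : Nat.card (PadovanWord 0) = 1 :=
  Nat.card_eq_one_iff_exists.2 ⟨⟨fun _ => true, rfl, rfl, fun _ _ => by omega, fun _ _ => by omega⟩,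
    fun ⟨b, hb0, _⟩ => Subtype.ext <| funext fun i => by fin_cases i; exact hb0⟩

theorem card_one : Nat.card (PadovanWord 1) = 1 :=
  Nat.card_eq_one_iff_exists.2 ⟨⟨fun _ => true, rfl, rfl, fun _ _ => by simp, fun _ _ => by omega⟩,
    fun ⟨b, hb0, hb1, _⟩ => Subtype.ext <| funext fun i => by fin_cases i <;> assumption⟩

theorem card_two : Nat.card (PadovanWord 2) = 1 := by
  refine Nat.card_eq_one_iff_exists.2 ⟨⟨![true, false, true], rfl, rfl, fun i h => ?_,
    fun i h => ?_⟩, fun ⟨b, hb0, hb2, _, h111⟩ => Subtype.ext <| funext fun i => ?_⟩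
  · have : i < 2 := by omega
    interval_cases i <;> simp
  · obtain rfl : i = 0 := by omega
    simp
  · have hb1 : b 1 = false := Bool.eq_false_iff.2 fun h => h111 0 (by omega) ⟨hb0, h, hb2⟩
    fin_cases i <;> simpa

theorem card_eq_padovan : ∀ n, Nat.card (PadovanWord n) = padovan (n + 1)
  | 0 => card_zero
  | 1 => card_one
  | 2 => card_two
  | n + 3 => by rw [card_add_three, card_eq_padovan (n + 1), card_eq_padovan n]; rfl

end PadovanWord

/-- The number of binary strings `b_1 ... b_m` (`m ≥ 2`) with `b_1 = b_m = 1`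
containing neither two consecutive zeros nor three consecutive ones equals the
`m`-th Padovan number. -/
theorem stmt_2 (m : ℕ) (hm : 2 ≤ m) :
    Nat.card {b : Fin m → Bool //
      b ⟨0, by omega⟩ = true ∧ b ⟨m - 1, by omega⟩ = true ∧
      (∀ i : ℕ, ∀ h : i + 1 < m, ¬(b ⟨i, by omega⟩ = false ∧ b ⟨i + 1, h⟩ = false)) ∧
      (∀ i : ℕ, ∀ h : i + 2 < m,
        ¬(b ⟨i, by omega⟩ = true ∧ b ⟨i + 1, by omega⟩ = true ∧ b ⟨i + 2, h⟩ = true))} =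
    padovan m := by
  obtain ⟨n, rfl⟩ : ∃ n, m = n + 1 := ⟨m - 1, by omega⟩
  exact PadovanWord.card_eq_padovan n
end

section
/- The number of maximal matchings in an undirected path with ℓ ≥ 1 edges equals the Padovan number P_{ℓ+2}, where P_1 = P_2 = P_3 = 1 and P_n = P_{n-2} + P_{n-3}. -/
/-- The path graph with `n` edges, on vertices `{0, 1, ..., n}`, with edges `{i, i+1}`. -/
def pathGraph (n : ℕ) : SimpleGraph (Fin (n + 1)) :=
  SimpleGraph.fromRel (fun u v => (v : ℕ) = (u : ℕ) + 1)

/-- A matching in a simple graph `G`: a set of edges of `G` that are pairwise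
vertex-disjoint (the empty set is allowed). -/
def IsMatching {V : Type*} (G : SimpleGraph V) (M : Set (Sym2 V)) : Prop :=
  M ⊆ G.edgeSet ∧ ∀ e ∈ M, ∀ f ∈ M, e ≠ f → ∀ v : V, ¬(v ∈ e ∧ v ∈ f)

/-- A maximal matching: a matching not properly contained in any other matching. -/
def IsMaximalMatching {V : Type*} (G : SimpleGraph V) (M : Set (Sym2 V)) : Prop :=
  IsMatching G M ∧ ∀ M' : Set (Sym2 V), IsMatching G M' → M ⊆ M' → M' = M

/-!
Edge `i` of the path joins `i` and `i + 1`, so two distinct edges meet exactly when their indices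
differ by one. Hence a set of edges is a maximal matching iff its set of indices is a maximal
independent set of the path on the indices `0, …, ℓ - 1`: no two consecutive indices are chosen and
every index left out has a chosen neighbour. Written as a `0/1` word of length `n + 3`, such a set
starts either with `10` or with `010`, followed by an arbitrary such word of length `n + 1`
resp. `n`; this is the Padovan recurrence.
-/

theorem isMaximalMatching_iff {V : Type*} {G : SimpleGraph V} {M : Set (Sym2 V)} :
    IsMaximalMatching G M ↔
      IsMatching G M ∧ ∀ e ∈ G.edgeSet, e ∉ M → ∃ f ∈ M, ∃ v, v ∈ e ∧ v ∈ f := by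
  refine ⟨fun ⟨hM, hmax⟩ => ⟨hM, fun e he heM => ?_⟩, fun ⟨hM, hdom⟩ => ⟨hM, fun M' hM' hMM' => ?_⟩⟩
  · by_contra! hfree
    have hins : IsMatching G (insert e M) := by
      refine ⟨Set.insert_subset he hM.1, ?_⟩
      rintro f (rfl | hf) g (rfl | hg) hfg v hv
      · exact hfg rfl
      · exact hfree g hg v hv.1 hv.2
      · exact hfree f hf v hv.2 hv.1
      · exact hM.2 f hf g hg hfg v hv
    exact heM (hmax _ hins (Set.subset_insert e M) ▸ Set.mem_insert e M)
  · refine Set.Subset.antisymm ?_ hMM'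
    intro e he
    by_contra heM
    obtain ⟨f, hf, v, hv⟩ := hdom e (hM'.1 he) heM
    exact hM'.2 e he f (hMM' hf) (fun h => heM (h ▸ hf)) v hv

section IndependentSets

variable {n : ℕ}

/-- `b` is the indicator of a maximal independent set of the path `0 - 1 - ⋯ - (n - 1)`. -/
def IsMaximalIndep (b : Fin n → Bool) : Prop :=
  (∀ i j : Fin n, i.val + 1 = j.val → ¬(b i = true ∧ b j = true)) ∧
  ∀ i : Fin n, b i = false → ∃ j : Fin n, (i.val + 1 = j.val ∨ j.val + 1 = i.val) ∧ b j = true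

instance : DecidablePred (@IsMaximalIndep n) := fun _ => by
  unfold IsMaximalIndep; infer_instance

theorem isMaximalIndep_cons_true_false (b : Fin n → Bool) :
    IsMaximalIndep (Fin.cons true (Fin.cons false b) : Fin (n + 2) → Bool) ↔ IsMaximalIndep b := by
  simp [IsMaximalIndep, Fin.forall_fin_succ, Fin.exists_fin_succ]

theorem isMaximalIndep_cons_false_true_false (b : Fin n → Bool) :
    IsMaximalIndep (Fin.cons false (Fin.cons true (Fin.cons false b)) : Fin (n + 3) → Bool) ↔
      IsMaximalIndep b := by
  simp [IsMaximalIndep, Fin.forall_fin_succ, Fin.exists_fin_succ]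

theorem IsMaximalIndep.eq_cons {b : Fin (n + 3) → Bool} (hb : IsMaximalIndep b) :
    (∃ t, b = Fin.cons true (Fin.cons false t)) ∨
      ∃ t, b = Fin.cons false (Fin.cons true (Fin.cons false t)) := by
  obtain ⟨x, y, z, t, rfl⟩ : ∃ x y z t, b = Fin.cons x (Fin.cons y (Fin.cons z t)) :=
    ⟨b 0, Fin.tail b 0, Fin.tail (Fin.tail b) 0, Fin.tail (Fin.tail (Fin.tail b)), by
      simp only [Fin.cons_self_tail]⟩
  cases x <;> cases y <;> cases z <;>
    simp_all [IsMaximalIndep, Fin.forall_fin_succ, Fin.exists_fin_succ]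

theorem card_isMaximalIndep_add_three (n : ℕ) :
    Fintype.card {b : Fin (n + 3) → Bool // IsMaximalIndep b} =
      Fintype.card {b : Fin (n + 1) → Bool // IsMaximalIndep b} +
        Fintype.card {b : Fin n → Bool // IsMaximalIndep b} := by
  let f (t : {t : Fin (n + 1) → Bool // IsMaximalIndep t}) :
      {b : Fin (n + 3) → Bool // IsMaximalIndep b} :=
    ⟨Fin.cons true (Fin.cons false t.1), (isMaximalIndep_cons_true_false t.1).2 t.2⟩
  let g (t : {t : Fin n → Bool // IsMaximalIndep t}) :
      {b : Fin (n + 3) → Bool // IsMaximalIndep b} :=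
    ⟨Fin.cons false (Fin.cons true (Fin.cons false t.1)),
      (isMaximalIndep_cons_false_true_false t.1).2 t.2⟩
  have hf : Function.Injective f := fun s t h => Subtype.ext (by simpa [f] using h)
  have hg : Function.Injective g := fun s t h => Subtype.ext (by simpa [g] using h)
  have hfg (s t) : f s ≠ g t := by simp [f, g]
  have hsurj : Function.Surjective (Sum.elim f g) := by
    rintro ⟨b, hb⟩
    rcases hb.eq_cons with ⟨t, rfl⟩ | ⟨t, rfl⟩
    · exact ⟨.inl ⟨t, (isMaximalIndep_cons_true_false t).1 hb⟩, rfl⟩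
    · exact ⟨.inr ⟨t, (isMaximalIndep_cons_false_true_false t).1 hb⟩, rfl⟩
  rw [← Fintype.card_sum]
  exact (Fintype.card_congr (Equiv.ofBijective _ ⟨hf.sumElim hg hfg, hsurj⟩)).symm

theorem card_isMaximalIndep :
    ∀ n, Fintype.card {b : Fin n → Bool // IsMaximalIndep b} = padovan (n + 2)
  | 0 | 1 | 2 => by decide
  | n + 3 => by
    rw [card_isMaximalIndep_add_three, card_isMaximalIndep (n + 1), card_isMaximalIndep n]
    rfl

end IndependentSets

section PathEdges

variable {ℓ : ℕ}

def pathEdge (i : Fin ℓ) : Sym2 (Fin (ℓ + 1)) := s(i.castSucc, i.succ)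

theorem mem_pathEdge {v : Fin (ℓ + 1)} {i : Fin ℓ} :
    v ∈ pathEdge i ↔ v.val = i.val ∨ v.val = i.val + 1 := by
  simp [pathEdge, Fin.ext_iff]

theorem pathEdge_injective : Function.Injective (pathEdge (ℓ := ℓ)) := by
  intro i j h
  simp only [pathEdge, Sym2.eq_iff, Fin.ext_iff, Fin.val_castSucc, Fin.val_succ] at h
  ext; omega

theorem edgeSet_pathGraph : (pathGraph ℓ).edgeSet = Set.range pathEdge := by
  ext e
  induction e with
  | h u v =>
    simp only [SimpleGraph.mem_edgeSet, pathGraph, SimpleGraph.fromRel_adj, Set.mem_range,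
      pathEdge, Sym2.eq_iff, Fin.ext_iff]
    constructor
    · rintro ⟨-, h | h⟩
      · exact ⟨⟨u, by omega⟩, by simp [h]⟩
      · exact ⟨⟨v, by omega⟩, by simp [h]⟩
    · rintro ⟨i, h | h⟩ <;> simp only [Fin.val_castSucc, Fin.val_succ] at h <;> omega

theorem exists_mem_pathEdge_iff {i j : Fin ℓ} :
    (∃ v, v ∈ pathEdge i ∧ v ∈ pathEdge j) ↔ i = j ∨ i.val + 1 = j.val ∨ j.val + 1 = i.val := by
  simp only [mem_pathEdge, Fin.ext_iff]
  constructor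
  · rintro ⟨v, hv⟩; omega
  · intro h
    exact ⟨⟨max i j, by omega⟩, by dsimp only; omega⟩

theorem isMaximalMatching_image_pathEdge_iff {b : Fin ℓ → Bool} :
    IsMaximalMatching (pathGraph ℓ) (pathEdge '' {i | b i}) ↔ IsMaximalIndep b := by
  have hdisj (i j : Fin ℓ) :
      (∀ v, ¬(v ∈ pathEdge i ∧ v ∈ pathEdge j)) ↔ ¬(∃ v, v ∈ pathEdge i ∧ v ∈ pathEdge j) :=
    not_exists.symm
  simp only [isMaximalMatching_iff, IsMatching, edgeSet_pathGraph, Set.image_subset_range,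
    Set.forall_mem_image, Set.exists_mem_image, Set.forall_mem_range,
    pathEdge_injective.mem_set_image, pathEdge_injective.ne_iff, hdisj, exists_mem_pathEdge_iff,
    IsMaximalIndep, true_and, Set.mem_ofPred_eq]
  grind

theorem card_isMaximalMatching_pathGraph :
    Nat.card {M : Set (Sym2 (Fin (ℓ + 1))) // IsMaximalMatching (pathGraph ℓ) M} =
      Fintype.card {b : Fin ℓ → Bool // IsMaximalIndep b} := by
  classical
  rw [← Nat.card_eq_fintype_card]
  refine (Nat.card_congr (Equiv.ofBijective
    (fun b => ⟨pathEdge '' {i | b.1 i}, isMaximalMatching_image_pathEdge_iff.2 b.2⟩) ⟨?_, ?_⟩)).symm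
  · intro b c h
    have hbc := Set.image_injective.2 pathEdge_injective (congrArg Subtype.val h)
    exact Subtype.ext (funext fun i => Bool.eq_iff_iff.2 (Set.ext_iff.1 hbc i))
  · rintro ⟨M, hM⟩
    have hMb : pathEdge '' {i | decide (pathEdge i ∈ M)} = M := by
      simp only [decide_eq_true_eq]
      exact Set.image_preimage_eq_of_subset (edgeSet_pathGraph ▸ hM.1.1)
    exact ⟨⟨fun i => decide (pathEdge i ∈ M),
      isMaximalMatching_image_pathEdge_iff.1 (by rwa [hMb])⟩, Subtype.ext hMb⟩

end PathEdges

theorem stmt_6_general (ℓ : ℕ) :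
    Nat.card {M : Set (Sym2 (Fin (ℓ + 1))) // IsMaximalMatching (pathGraph ℓ) M} =
    padovan (ℓ + 2) := by
  rw [card_isMaximalMatching_pathGraph, card_isMaximalIndep]

/-- The number of maximal matchings in an undirected path with `ℓ ≥ 1` edges
equals the Padovan number `P_{ℓ+2}`. -/
theorem stmt_6 (ℓ : ℕ) (hℓ : 1 ≤ ℓ) :
    Nat.card {M : Set (Sym2 (Fin (ℓ + 1))) // IsMaximalMatching (pathGraph ℓ) M} =
    padovan (ℓ + 2) :=
  stmt_6_general ℓ
end
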